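/- For every j ∈ {0,1,…,k-2} one has (α_k - α_j)/(α_k - α_{j+1}) ≤ 4 (note α_k = π). -/

import Mathlib

/-! Under `s = cos θ` the weight `g(s) ds / √(1 - s²)` becomes `g(cos θ) dθ`, and
`π - α_j = arccos t_j`. Put `φ = arccos t_{j+1}` and `ψ = arccos t_j`. The cell `[t_j, t_{j+1}]`
has mass `π/k`, which is at most the mass of the tail `[t_{j+1}, 1]`, and that is at most `g(1) φ`
because `g` is increasing. Concavity and `g(-1) ≥ 0` give `g(s) ≥ g(1)(1 + s)/2`, so if `ψ > 4φ`
the cell contains `[cos 4φ, cos φ]`, of mass at least `g(1)(3φ + sin 4φ - sin φ)/2 > g(1) φ`. -/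

open Real MeasureTheory Set intervalIntegral

theorem intervalIntegrable_deriv_of_nonneg_on_Ioo {F F' : ℝ → ℝ} {l u a b : ℝ}
    (hF : ContinuousOn F (Icc l u)) (hderiv : ∀ x ∈ Ioo l u, HasDerivAt F (F' x) x)
    (hpos : ∀ x ∈ Ioo l u, 0 ≤ F' x) (ha : a ∈ Icc l u) (hb : b ∈ Icc l u) :
    IntervalIntegrable F' volume a b :=
  have hsub : Ioo (min a b) (max a b) ⊆ Ioo l u :=
    Ioo_subset_Ioo (le_min ha.1 hb.1) (max_le ha.2 hb.2)
  intervalIntegrable_deriv_of_nonneg (hF.mono (uIcc_subset_Icc ha hb))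
    (fun x hx => hderiv x (hsub hx)) (fun x hx => hpos x (hsub hx))

theorem integral_eq_sub_of_deriv_nonneg_on_Ioo {F F' : ℝ → ℝ} {l u a b : ℝ}
    (hF : ContinuousOn F (Icc l u)) (hderiv : ∀ x ∈ Ioo l u, HasDerivAt F (F' x) x)
    (hpos : ∀ x ∈ Ioo l u, 0 ≤ F' x) (ha : a ∈ Icc l u) (hb : b ∈ Icc l u) :
    ∫ x in a..b, F' x = F b - F a :=
  have hsub : Ioo (min a b) (max a b) ⊆ Ioo l u :=
    Ioo_subset_Ioo (le_min ha.1 hb.1) (max_le ha.2 hb.2)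
  integral_eq_sub_of_hasDeriv_right (hF.mono (uIcc_subset_Icc ha hb))
    (fun x hx => (hderiv x (hsub hx)).hasDerivWithinAt)
    (intervalIntegrable_deriv_of_nonneg_on_Ioo hF hderiv hpos ha hb)

theorem sqrt_one_sub_sq_pos {x : ℝ} (hx : x ∈ Ioo (-1 : ℝ) 1) : 0 < √(1 - x ^ 2) :=
  sqrt_pos.2 (by nlinarith [hx.1, hx.2])

theorem hasDerivAt_neg_arccos {x : ℝ} (hx : x ∈ Ioo (-1 : ℝ) 1) :
    HasDerivAt (fun s => -arccos s) (1 / √(1 - x ^ 2)) x :=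
  (hasDerivAt_arccos hx.1.ne' hx.2.ne).neg.congr_deriv (neg_neg _)

theorem hasDerivAt_neg_arccos_sub_sqrt {x : ℝ} (hx : x ∈ Ioo (-1 : ℝ) 1) :
    HasDerivAt (fun s => -arccos s - √(1 - s ^ 2)) ((1 + x) / √(1 - x ^ 2)) x := by
  have hsqrt := ((hasDerivAt_pow 2 x).const_sub 1).sqrt (sqrt_pos.1 (sqrt_one_sub_sq_pos hx)).ne'
  refine ((hasDerivAt_neg_arccos hx).sub hsqrt).congr_deriv ?_
  field_simp [(sqrt_one_sub_sq_pos hx).ne']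
  ring

theorem intervalIntegrable_one_div_sqrt_one_sub_sq {a b : ℝ} (ha : a ∈ Icc (-1 : ℝ) 1)
    (hb : b ∈ Icc (-1 : ℝ) 1) : IntervalIntegrable (fun s => 1 / √(1 - s ^ 2)) volume a b :=
  intervalIntegrable_deriv_of_nonneg_on_Ioo (F := fun s => -arccos s)
    continuous_arccos.neg.continuousOn
    (fun _ hx => hasDerivAt_neg_arccos hx) (fun _ _ => by positivity) ha hb

theorem integral_one_div_sqrt_one_sub_sq {a b : ℝ} (ha : a ∈ Icc (-1 : ℝ) 1)
    (hb : b ∈ Icc (-1 : ℝ) 1) : ∫ s in a..b, 1 / √(1 - s ^ 2) = arccos a - arccos b := by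
  rw [integral_eq_sub_of_deriv_nonneg_on_Ioo (F := fun s => -arccos s)
    continuous_arccos.neg.continuousOn
    (fun _ hx => hasDerivAt_neg_arccos hx) (fun _ _ => by positivity) ha hb]
  ring

theorem one_add_div_sqrt_one_sub_sq_nonneg {x : ℝ} (hx : x ∈ Ioo (-1 : ℝ) 1) :
    0 ≤ (1 + x) / √(1 - x ^ 2) :=
  div_nonneg (by linarith [hx.1]) (sqrt_nonneg _)

theorem intervalIntegrable_one_add_div_sqrt_one_sub_sq {a b : ℝ} (ha : a ∈ Icc (-1 : ℝ) 1)
    (hb : b ∈ Icc (-1 : ℝ) 1) :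
    IntervalIntegrable (fun s => (1 + s) / √(1 - s ^ 2)) volume a b :=
  intervalIntegrable_deriv_of_nonneg_on_Ioo (by fun_prop)
    (fun _ hx => hasDerivAt_neg_arccos_sub_sqrt hx)
    (fun _ hx => one_add_div_sqrt_one_sub_sq_nonneg hx) ha hb

theorem integral_one_add_div_sqrt_one_sub_sq {a b : ℝ} (ha : a ∈ Icc (-1 : ℝ) 1)
    (hb : b ∈ Icc (-1 : ℝ) 1) :
    ∫ s in a..b, (1 + s) / √(1 - s ^ 2) =
      arccos a + √(1 - a ^ 2) - (arccos b + √(1 - b ^ 2)) := by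
  rw [integral_eq_sub_of_deriv_nonneg_on_Ioo (by fun_prop)
    (fun _ hx => hasDerivAt_neg_arccos_sub_sqrt hx)
    (fun _ hx => one_add_div_sqrt_one_sub_sq_nonneg hx) ha hb]
  ring

theorem IntervalIntegrable.mono_set_Icc {f : ℝ → ℝ} {l u a b : ℝ}
    (hf : IntervalIntegrable f volume l u) (ha : a ∈ Icc l u) (hb : b ∈ Icc l u) :
    IntervalIntegrable f volume a b :=
  hf.mono_set (uIcc_subset_uIcc (Icc_subset_uIcc ha) (Icc_subset_uIcc hb))

theorem sqrt_one_sub_cos_sq {θ : ℝ} (h₀ : 0 ≤ θ) (hπ : θ ≤ π) : √(1 - cos θ ^ 2) = sin θ := by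
  rw [← sin_arccos, arccos_cos h₀ hπ]

theorem ConcaveOn.mul_one_add_div_two_le {g : ℝ → ℝ} (hconc : ConcaveOn ℝ (Icc (-1) 1) g)
    (h₀ : 0 ≤ g (-1)) {s : ℝ} (hs : s ∈ Icc (-1 : ℝ) 1) : g 1 * ((1 + s) / 2) ≤ g s := by
  have h := hconc.2 (left_mem_Icc.2 (by norm_num : (-1 : ℝ) ≤ 1))
    (right_mem_Icc.2 (by norm_num : (-1 : ℝ) ≤ 1))
    (by linarith [hs.2] : 0 ≤ (1 - s) / 2) (by linarith [hs.1] : 0 ≤ (1 + s) / 2) (by ring)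
  simp only [smul_eq_mul] at h
  rw [show (1 - s) / 2 * -1 + (1 + s) / 2 * 1 = s by ring] at h
  nlinarith [mul_nonneg (by linarith [hs.2] : (0 : ℝ) ≤ (1 - s) / 2) h₀]

section Weighted

variable {g : ℝ → ℝ}

theorem integral_cos_one_le_of_monotoneOn (hmono : MonotoneOn g (Icc (-1) 1))
    (hint : IntervalIntegrable (fun s => g s / √(1 - s ^ 2)) volume (-1) 1)
    {θ : ℝ} (h₀ : 0 ≤ θ) (hπ : θ ≤ π) :
    ∫ s in cos θ..1, g s / √(1 - s ^ 2) ≤ g 1 * θ := by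
  have h1 : (1 : ℝ) ∈ Icc (-1 : ℝ) 1 := right_mem_Icc.2 (by norm_num)
  calc ∫ s in cos θ..1, g s / √(1 - s ^ 2)
      ≤ ∫ s in cos θ..1, g 1 * (1 / √(1 - s ^ 2)) := by
        refine integral_mono_on (cos_le_one θ) (hint.mono_set_Icc (cos_mem_Icc θ) h1)
          ((intervalIntegrable_one_div_sqrt_one_sub_sq (cos_mem_Icc θ) h1).const_mul _)
          fun s hs => ?_
        rw [mul_one_div]
        exact div_le_div_of_nonneg_right
          (hmono ⟨(cos_mem_Icc θ).1.trans hs.1, hs.2⟩ h1 hs.2) (sqrt_nonneg _)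
    _ = g 1 * θ := by
        rw [intervalIntegral.integral_const_mul,
          integral_one_div_sqrt_one_sub_sq (cos_mem_Icc θ) h1, arccos_cos h₀ hπ, arccos_one,
          sub_zero]

theorem le_integral_cos_cos_of_concaveOn (hconc : ConcaveOn ℝ (Icc (-1) 1) g)
    (h₀ : 0 ≤ g (-1)) (hint : IntervalIntegrable (fun s => g s / √(1 - s ^ 2)) volume (-1) 1)
    {θ₁ θ₂ : ℝ} (h₁ : 0 ≤ θ₁) (h₁₂ : θ₁ ≤ θ₂) (h₂ : θ₂ ≤ π) :
    g 1 / 2 * (θ₂ - θ₁ + sin θ₂ - sin θ₁) ≤ ∫ s in cos θ₂..cos θ₁, g s / √(1 - s ^ 2) := by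
  have hcos : cos θ₂ ≤ cos θ₁ := cos_le_cos_of_nonneg_of_le_pi h₁ h₂ h₁₂
  have hθ₁ : θ₁ ≤ π := h₁₂.trans h₂
  have hθ₂ : 0 ≤ θ₂ := h₁.trans h₁₂
  calc g 1 / 2 * (θ₂ - θ₁ + sin θ₂ - sin θ₁)
      = ∫ s in cos θ₂..cos θ₁, g 1 / 2 * ((1 + s) / √(1 - s ^ 2)) := by
        rw [intervalIntegral.integral_const_mul,
          integral_one_add_div_sqrt_one_sub_sq (cos_mem_Icc θ₂) (cos_mem_Icc θ₁),
          arccos_cos h₁ hθ₁, arccos_cos hθ₂ h₂, sqrt_one_sub_cos_sq h₁ hθ₁,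
          sqrt_one_sub_cos_sq hθ₂ h₂]
        ring
    _ ≤ ∫ s in cos θ₂..cos θ₁, g s / √(1 - s ^ 2) := by
        refine integral_mono_on hcos
          ((intervalIntegrable_one_add_div_sqrt_one_sub_sq (cos_mem_Icc θ₂)
            (cos_mem_Icc θ₁)).const_mul _)
          (hint.mono_set_Icc (cos_mem_Icc θ₂) (cos_mem_Icc θ₁)) fun s hs => ?_
        have hs' : s ∈ Icc (-1 : ℝ) 1 :=
          ⟨(cos_mem_Icc θ₂).1.trans hs.1, hs.2.trans (cos_le_one θ₁)⟩
        rw [show g 1 / 2 * ((1 + s) / √(1 - s ^ 2)) = g 1 * ((1 + s) / 2) / √(1 - s ^ 2) by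
          ring]
        exact div_le_div_of_nonneg_right (hconc.mul_one_add_div_two_le h₀ hs') (sqrt_nonneg _)

theorem le_four_mul_of_integral_le (hg0 : ∀ x ∈ Icc (-1 : ℝ) 1, 0 ≤ g x)
    (hmono : MonotoneOn g (Icc (-1) 1)) (hconc : ConcaveOn ℝ (Icc (-1) 1) g)
    (hint : IntervalIntegrable (fun s => g s / √(1 - s ^ 2)) volume (-1) 1)
    {φ ψ : ℝ} (hφ : 0 ≤ φ) (hψ : ψ ≤ π)
    (hpos : 0 < ∫ s in cos ψ..cos φ, g s / √(1 - s ^ 2))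
    (hle : ∫ s in cos ψ..cos φ, g s / √(1 - s ^ 2) ≤ ∫ s in cos φ..1, g s / √(1 - s ^ 2)) :
    ψ ≤ 4 * φ := by
  by_contra! h
  have hupper := integral_cos_one_le_of_monotoneOn hmono hint hφ (by linarith)
  have hlower := le_integral_cos_cos_of_concaveOn hconc
    (hg0 (-1) (left_mem_Icc.2 (by norm_num))) hint hφ (by linarith : φ ≤ 4 * φ) (by linarith)
  have hsplit : ∫ s in cos (4 * φ)..cos φ, g s / √(1 - s ^ 2)
      ≤ ∫ s in cos ψ..cos φ, g s / √(1 - s ^ 2) := by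
    rw [← integral_add_adjacent_intervals (a := cos ψ) (b := cos (4 * φ))
      (hint.mono_set_Icc (cos_mem_Icc _) (cos_mem_Icc _))
      (hint.mono_set_Icc (cos_mem_Icc _) (cos_mem_Icc _))]
    refine le_add_of_nonneg_left (integral_nonneg
      (cos_le_cos_of_nonneg_of_le_pi (by linarith) hψ h.le) fun s hs => ?_)
    exact div_nonneg (hg0 s ⟨(cos_mem_Icc ψ).1.trans hs.1, hs.2.trans (cos_le_one _)⟩)
      (sqrt_nonneg _)
  have hprod : 0 < g 1 * φ := by linarith
  have hg1 : 0 < g 1 := pos_of_mul_pos_left hprod hφ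
  have hφ' : 0 < φ := pos_of_mul_pos_right hprod hg1.le
  have hsin : sin φ < φ := sin_lt hφ'
  have hsin4 : 0 < sin (4 * φ) := sin_pos_of_pos_of_lt_pi (by linarith) (by linarith)
  nlinarith

end Weighted

section Nodes

variable {f : ℝ → ℝ} {k : ℕ} {t : ℕ → ℝ}

theorem integral_neg_one_node (hk : 0 < k)
    (htW : ∀ j ≤ k, (k / π) * ∫ s in (-1)..t j, f s = j) {i : ℕ} (hi : i ≤ k) :
    ∫ s in (-1)..t i, f s = i * π / k := by
  rw [eq_div_iff (Nat.cast_pos.2 hk).ne', ← htW i hi]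
  field_simp

theorem intervalIntegrable_of_integral_neg_one_node (hk : 0 < k) (htk : t k = 1)
    (htW : ∀ j ≤ k, (k / π) * ∫ s in (-1)..t j, f s = j) :
    IntervalIntegrable f volume (-1) 1 := by
  -- a non-integrable function would have integral `0`, but the total mass is `π`
  have htotal := integral_neg_one_node hk htW le_rfl
  rw [htk, mul_div_cancel_left₀ _ (Nat.cast_pos.2 hk).ne'] at htotal
  exact intervalIntegrable_of_integral_ne_zero (htotal ▸ pi_ne_zero)

theorem integral_node_node (hk : 0 < k) (htk : t k = 1)
    (htmem : ∀ j ≤ k, t j ∈ Icc (-1 : ℝ) 1) (htW : ∀ j ≤ k, (k / π) * ∫ s in (-1)..t j, f s = j)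
    {i i' : ℕ} (hi : i ≤ k) (hi' : i' ≤ k) :
    ∫ s in t i..t i', f s = (i' - i : ℝ) * π / k := by
  have hint := intervalIntegrable_of_integral_neg_one_node hk htk htW
  have hm1 : (-1 : ℝ) ∈ Icc (-1 : ℝ) 1 := left_mem_Icc.2 (by norm_num)
  rw [← integral_interval_sub_left (hint.mono_set_Icc hm1 (htmem i' hi'))
    (hint.mono_set_Icc hm1 (htmem i hi)), integral_neg_one_node hk htW hi',
    integral_neg_one_node hk htW hi]
  ring

end Nodes

theorem stmt_11_general (k : ℕ) (g : ℝ → ℝ)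
    (hg0 : ∀ x ∈ Set.Icc (-1:ℝ) 1, 0 ≤ g x)
    (hgmono : MonotoneOn g (Set.Icc (-1:ℝ) 1))
    (hgconc : ConcaveOn ℝ (Set.Icc (-1:ℝ) 1) g)
    (t : ℕ → ℝ)
    (htk : t k = 1)
    (htmem : ∀ j ≤ k, t j ∈ Set.Icc (-1:ℝ) 1)
    (htW : ∀ j ≤ k,
      ((k : ℝ) / π) * ∫ s in (-1:ℝ)..(t j), g s / Real.sqrt (1 - s ^ 2) = (j : ℝ))
    (α : ℕ → ℝ) (hα : ∀ j ≤ k, α j = Real.arccos (-(t j)))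
    :
    ∀ j : ℕ, j + 2 ≤ k → (α k - α j) / (α k - α (j + 1)) ≤ 4 := by
  intro j hj
  have hk : 0 < k := by omega
  have hj₀ : j ≤ k := by omega
  have hj₁ : j + 1 ≤ k := by omega
  have hgap : ∀ i ≤ k, α k - α i = arccos (t i) := fun i hi => by
    rw [hα k le_rfl, hα i hi, htk, arccos_neg, arccos_neg, arccos_one]
    ring
  have hstep := integral_node_node hk htk htmem htW hj₀ hj₁
  have htail := integral_node_node hk htk htmem htW hj₁ le_rfl
  rw [htk] at htail
  rw [hgap j hj₀, hgap (j + 1) hj₁]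
  refine div_le_of_le_mul₀ (arccos_nonneg _) (by norm_num)
    (le_four_mul_of_integral_le hg0 hgmono hgconc
      (intervalIntegrable_of_integral_neg_one_node hk htk htW) (arccos_nonneg _) (arccos_le_pi _)
      ?_ ?_)
  all_goals
    rw [cos_arccos (htmem j hj₀).1 (htmem j hj₀).2, cos_arccos (htmem _ hj₁).1 (htmem _ hj₁).2]
  · rw [hstep]
    push_cast
    ring_nf
    positivity
  · rw [hstep, htail]
    have hj₂ : (j : ℝ) + 2 ≤ k := by exact_mod_cast hj
    gcongr ?_ / _
    exact mul_le_mul_of_nonneg_right (by push_cast; linarith) pi_pos.le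

theorem stmt_11 (k : ℕ) (hk : 2 ≤ k) (g : ℝ → ℝ)
    (hg0 : ∀ x ∈ Set.Icc (-1:ℝ) 1, 0 ≤ g x)
    (hgmono : MonotoneOn g (Set.Icc (-1:ℝ) 1))
    (hgconc : ConcaveOn ℝ (Set.Icc (-1:ℝ) 1) g)
    (hgconv : ConvexOn ℝ (Set.Ioo (-1:ℝ) 1) (fun s => g s / (1 + s)))
    (hnorm : (1 / π) * ∫ s in (-1:ℝ)..1, g s / Real.sqrt (1 - s ^ 2) = 1)
    (t : ℕ → ℝ)
    (ht0 : t 0 = -1) (htk : t k = 1)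
    (htmem : ∀ j ≤ k, t j ∈ Set.Icc (-1:ℝ) 1)
    (htmono : ∀ i j : ℕ, i < j → j ≤ k → t i < t j)
    (htW : ∀ j ≤ k,
      ((k : ℝ) / π) * ∫ s in (-1:ℝ)..(t j), g s / Real.sqrt (1 - s ^ 2) = (j : ℝ))
    (α : ℕ → ℝ) (hα : ∀ j ≤ k, α j = Real.arccos (-(t j)))
    :
    ∀ j : ℕ, j + 2 ≤ k → (α k - α j) / (α k - α (j + 1)) ≤ 4 :=
  stmt_11_general k g hg0 hgmono hgconc t htk htmem htW α hα
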